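/- arXiv:1808.01428 — 2 statements merged into one kernel-verified Lean document; each statement's English description precedes it below -/
import Mathlib

section
/- For every finite group G and every inverse-closed subset S ⊆ G with 1 ∉ S, the Cayley graph Cay(G,S) is not distance-regular with intersection array {6,4,2,1; 1,1,4,6}. Equivalently, the collinearity graph of the 3-cover of the generalized quadrangle GQ(2,2) — the unique distance-regular graph with this intersection array, on 45 vertices (a halved graph of the Foster graph) — is not a Cayley graph; consequently the Foster graph is not a Cayley graph. -/
/-- The Cayley graph of a group `G` with connection set `S`. When `S` is inverse-closed
and does not contain `1`, distinct `a b` are adjacent iff `a * b⁻¹ ∈ S`. -/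
def cayleyGraph {G : Type*} [Group G] (S : Set G) : SimpleGraph G where
  Adj a b := a ≠ b ∧ a * b⁻¹ ∈ S ∧ b * a⁻¹ ∈ S
  symm := ⟨fun a b h => ⟨h.1.symm, h.2.2, h.2.1⟩⟩
  loopless := ⟨fun a h => h.1 rfl⟩

/-- `Γ.IsDRGWith b c` means that `Γ` is a distance-regular graph with intersection array
`{b₀, …, b_{d-1}; c₁, …, c_d}`, where `d` is the diameter of `Γ`. -/
def SimpleGraph.IsDRGWith {V : Type*} (Γ : SimpleGraph V) (b c : List ℕ) : Prop :=
  Γ.Connected ∧ c.length = b.length ∧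
  (∀ x y : V, Γ.dist x y ≤ b.length) ∧
  (∃ x y : V, Γ.dist x y = b.length) ∧
  ∀ (i : ℕ) (x y : V), Γ.dist x y = i →
    (i < b.length → {z : V | Γ.Adj y z ∧ Γ.dist x z = i + 1}.ncard = b.getD i 0) ∧
    (1 ≤ i → {z : V | Γ.Adj y z ∧ Γ.dist x z = i - 1}.ncard = c.getD (i - 1) 0)

/-!
Counting the spheres around a vertex shows that a distance-regular graph with intersection array
{6,4,2,1; 1,1,4,6} has 1 + 6 + 24 + 12 + 2 = 45 vertices, and since a₁ = c₂ = 1, two distinct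
vertices have at most one common neighbour. A group of order 45 is abelian: its Sylow subgroups,
of orders 9 and 5, are normal and abelian. In a Cayley graph of an abelian group with connection
set S of size at least 3 there are s ≠ t in S with st ≠ 1, and then s and t are two common
neighbours of 1 and st = ts.
-/

open Finset

section Sylow

variable {G : Type*} [Group G] [Finite G]

theorem Sylow.normal_of_forall_mem_divisors_index {p : ℕ} [Fact p.Prime] (P : Sylow p G)
    (h : ∀ n ∈ P.index.divisors, n ≡ 1 [MOD p] → n = 1) : P.Normal :=
  have : Subsingleton (Sylow p G) := (Nat.card_eq_one_iff_unique.mp <|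
    h _ (Nat.mem_divisors.mpr ⟨P.card_dvd_index, Subgroup.index_ne_zero_of_finite⟩)
      (card_sylow_modEq_one p G)).1
  P.normal_of_subsingleton

theorem isMulCommutative_of_forall_sylow
    (hn : ∀ {p : ℕ} [Fact p.Prime] (P : Sylow p G), P.Normal)
    (hc : ∀ {p : ℕ} [Fact p.Prime] (P : Sylow p G), IsMulCommutative P) :
    IsMulCommutative G := by
  refine isMulCommutative_iff.mpr fun a b => ?_
  let e := Sylow.directProductOfNormal hn
  obtain ⟨x, rfl⟩ := e.surjective a
  obtain ⟨y, rfl⟩ := e.surjective b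
  have : x * y = y * x := by
    funext p P
    have : Fact (p : ℕ).Prime := ⟨Nat.prime_of_mem_primeFactors p.2⟩
    have := hc P
    exact mul_comm' (x p P) (y p P)
  rw [← map_mul, this, map_mul]

theorem Nat.factorization_45 :
    (45 : ℕ).factorization = Finsupp.single 3 2 + Finsupp.single 5 1 := by
  rw [show (45 : ℕ) = 3 ^ 2 * 5 by norm_num, Nat.factorization_mul (by norm_num) (by norm_num),
    Nat.Prime.factorization_pow (by norm_num), Nat.Prime.factorization (by norm_num)]

theorem Sylow.card_of_card_eq_45 (hG : Nat.card G = 45) {p : ℕ} [Fact p.Prime]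
    (P : Sylow p G) :
    p = 3 ∧ Nat.card P = 3 ^ 2 ∨ p = 5 ∧ Nat.card P = 5 ∨ Nat.card P = 1 := by
  rw [P.card_eq_multiplicity, hG, Nat.factorization_45]
  by_cases h3 : p = 3
  · subst h3; simp
  by_cases h5 : p = 5
  · subst h5; simp
  simp [Ne.symm h3, Ne.symm h5]

theorem Sylow.normal_of_card_eq_45 (hG : Nat.card G = 45) {p : ℕ} [Fact p.Prime]
    (P : Sylow p G) : P.Normal := by
  have hindex := (P : Subgroup G).card_mul_index
  rcases P.card_of_card_eq_45 hG with ⟨rfl, hP⟩ | ⟨rfl, hP⟩ | hP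
  · have : P.index = 5 := by rw [hP, hG] at hindex; omega
    exact P.normal_of_forall_mem_divisors_index (by rw [this]; decide)
  · have : P.index = 9 := by rw [hP, hG] at hindex; omega
    exact P.normal_of_forall_mem_divisors_index (by rw [this]; decide)
  · rw [Subgroup.card_eq_one.mp hP]
    infer_instance

theorem Sylow.isMulCommutative_of_card_eq_45 (hG : Nat.card G = 45) {p : ℕ} [Fact p.Prime]
    (P : Sylow p G) : IsMulCommutative P := by
  rcases P.card_of_card_eq_45 hG with ⟨rfl, hP⟩ | ⟨rfl, hP⟩ | hP
  · exact IsPGroup.isMulCommutative_of_card_eq_prime_sq hP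
  · have := isCyclic_of_prime_card hP
    exact isMulCommutative_iff.mpr IsCyclic.commGroup.mul_comm
  · have := (Nat.card_eq_one_iff_unique.mp hP).1
    exact isMulCommutative_iff.mpr fun _ _ => Subsingleton.elim _ _

theorem isMulCommutative_of_card_eq_45 (hG : Nat.card G = 45) : IsMulCommutative G :=
  isMulCommutative_of_forall_sylow (·.normal_of_card_eq_45 hG)
    (·.isMulCommutative_of_card_eq_45 hG)

end Sylow

namespace SimpleGraph.IsDRGWith

variable {V : Type*} {Γ : SimpleGraph V} {b c : List ℕ}

theorem ncard_neighborSet (h : Γ.IsDRGWith b c) (hb : b ≠ []) (x : V) :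
    (Γ.neighborSet x).ncard = b.getD 0 0 := by
  have := (h.2.2.2.2 0 x x dist_self).1 (List.length_pos_iff.mpr hb)
  simp only [zero_add, dist_eq_one_iff_adj, and_self] at this
  exact this

variable [Fintype V]

theorem card_eq_sum_card_sphere (h : Γ.IsDRGWith b c) (x : V) :
    Fintype.card V = ∑ i ∈ range (b.length + 1), #{y | Γ.dist x y = i} :=
  card_eq_sum_card_fiberwise fun y _ => mem_range.mpr (Nat.lt_succ_of_le (h.2.2.1 x y))

section Adj

variable [DecidableRel Γ.Adj]

theorem card_adj_dist_succ (h : Γ.IsDRGWith b c) {x y : V} {i : ℕ} (hxy : Γ.dist x y = i)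
    (hi : i < b.length) : #{z | Γ.Adj y z ∧ Γ.dist x z = i + 1} = b.getD i 0 := by
  rw [← (h.2.2.2.2 i x y hxy).1 hi, Set.ncard_eq_toFinset_card', Set.toFinset_ofPred]

theorem card_adj_dist_pred (h : Γ.IsDRGWith b c) {x y : V} {i : ℕ} (hxy : Γ.dist x y = i + 1) :
    #{z | Γ.Adj y z ∧ Γ.dist x z = i} = c.getD i 0 := by
  have := (h.2.2.2.2 (i + 1) x y hxy).2 (by omega)
  rw [Nat.add_sub_cancel] at this
  rw [← this, Set.ncard_eq_toFinset_card', Set.toFinset_ofPred]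

theorem card_adj (h : Γ.IsDRGWith b c) (hb : b ≠ []) (y : V) :
    #{z | Γ.Adj y z} = b.getD 0 0 := by
  rw [← h.card_adj_dist_succ (x := y) dist_self (List.length_pos_iff.mpr hb)]
  simp only [zero_add, dist_eq_one_iff_adj, and_self]

theorem card_adj_dist_one_of_adj (h : Γ.IsDRGWith b c) (hb : 2 ≤ b.length) {x y : V}
    (hxy : Γ.Adj x y) :
    c.getD 0 0 + #{z | Γ.Adj y z ∧ Γ.dist x z = 1} + b.getD 1 0 = b.getD 0 0 := by
  have hdist : Γ.dist x y = 0 + 1 := dist_eq_one_iff_adj.mpr hxy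
  have hsplit := card_eq_sum_card_fiberwise (s := {z | Γ.Adj y z}) (t := range 3)
    (f := Γ.dist x) fun z hz => by
      have := h.1.dist_triangle (u := x) (v := y) (w := z)
      rw [hdist, dist_eq_one_iff_adj.mpr (mem_filter.mp hz).2] at this
      simp only [coe_range, Set.mem_Iio]
      omega
  simp only [sum_range_succ, sum_range_zero, filter_filter, zero_add] at hsplit
  rw [h.card_adj (List.ne_nil_of_length_pos (by omega)), h.card_adj_dist_pred hdist,
    h.card_adj_dist_succ hdist (by omega)] at hsplit
  exact hsplit.symm

end Adj

theorem card_sphere_mul (h : Γ.IsDRGWith b c) (x : V) {i : ℕ} (hi : i < b.length) :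
    #{y | Γ.dist x y = i} * b.getD i 0 = #{y | Γ.dist x y = i + 1} * c.getD i 0 := by
  classical
  refine card_mul_eq_card_mul Γ.Adj (fun y hy => ?_) (fun z hz => ?_)
  · rw [← h.card_adj_dist_succ (mem_filter.mp hy).2 hi, bipartiteAbove, filter_filter]
    simp_rw [and_comm]
  · rw [← h.card_adj_dist_pred (mem_filter.mp hz).2, bipartiteBelow, filter_filter]
    simp_rw [and_comm, Γ.adj_comm]

theorem card_eq_45 (h : Γ.IsDRGWith [6, 4, 2, 1] [1, 1, 4, 6]) : Fintype.card V = 45 := by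
  obtain ⟨x, -⟩ := h.2.2.2.1
  have h0 : #{y | Γ.dist x y = 0} = 1 := by
    rw [card_eq_one]
    exact ⟨x, by ext y; simp [h.1.dist_eq_zero_iff, eq_comm]⟩
  have h1 := h.card_sphere_mul x (i := 0) (by simp)
  have h2 := h.card_sphere_mul x (i := 1) (by simp)
  have h3 := h.card_sphere_mul x (i := 2) (by simp)
  have h4 := h.card_sphere_mul x (i := 3) (by simp)
  simp only [List.getD_cons_zero, List.getD_cons_succ, Nat.reduceAdd] at h1 h2 h3 h4
  rw [h.card_eq_sum_card_sphere x]
  simp only [List.length_cons, List.length_nil, sum_range_succ, sum_range_zero]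
  omega

/-- `ha₁` says `a₁ ≤ 1`, where `b₀ = c₁ + a₁ + b₁`. -/
theorem commonNeighbors_subsingleton (h : Γ.IsDRGWith b c) (hb : 2 ≤ b.length)
    (ha₁ : b.getD 0 0 ≤ c.getD 0 0 + 1 + b.getD 1 0) (hc₂ : c.getD 1 0 ≤ 1) {x y : V}
    (hxy : x ≠ y) : (Γ.commonNeighbors x y).Subsingleton := by
  classical
  have hcard : #{z | Γ.Adj y z ∧ Γ.dist x z = 1} ≤ 1 := by
    have hpos : Γ.dist x y ≠ 0 := fun h0 => hxy (h.1.dist_eq_zero_iff.mp h0)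
    obtain hd | hd | hd : Γ.dist x y = 1 ∨ Γ.dist x y = 1 + 1 ∨ 3 ≤ Γ.dist x y := by omega
    · have := h.card_adj_dist_one_of_adj hb (dist_eq_one_iff_adj.mp hd)
      omega
    · exact (h.card_adj_dist_pred hd).le.trans hc₂
    · have hempty : ({z | Γ.Adj y z ∧ Γ.dist x z = 1} : Finset V) = ∅ := by
        refine filter_eq_empty_iff.mpr ?_
        rintro z - ⟨hyz, hxz⟩
        have := h.1.dist_triangle (u := x) (v := z) (w := y)
        rw [hxz, dist_eq_one_iff_adj.mpr hyz.symm] at this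
        omega
      rw [hempty, card_empty]
      exact zero_le_one
  have hmem {z : V} (hz : z ∈ Γ.commonNeighbors x y) :
      z ∈ ({z | Γ.Adj y z ∧ Γ.dist x z = 1} : Finset V) := by
    rw [mem_commonNeighbors] at hz
    simp [hz.1, hz.2]
  exact fun z hz w hw => card_le_one.mp hcard z (hmem hz) w (hmem hw)

end SimpleGraph.IsDRGWith

section Cayley

variable {G : Type*} [Group G] {S : Set G}

theorem cayleyGraph_adj_iff (hS : ∀ s ∈ S, s⁻¹ ∈ S) (h1 : (1 : G) ∉ S) {a b : G} :
    (cayleyGraph S).Adj a b ↔ a * b⁻¹ ∈ S := by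
  refine ⟨fun h => h.2.1, fun h => ⟨?_, h, by simpa using hS _ h⟩⟩
  rintro rfl
  exact h1 (by simpa using h)

theorem cayleyGraph_neighborSet_one (hS : ∀ s ∈ S, s⁻¹ ∈ S) (h1 : (1 : G) ∉ S) :
    (cayleyGraph S).neighborSet 1 = S := by
  ext s
  rw [SimpleGraph.mem_neighborSet, cayleyGraph_adj_iff hS h1, one_mul]
  exact ⟨fun h => by simpa using hS _ h, hS s⟩

theorem cayleyGraph_mem_commonNeighbors_one_mul (hS : ∀ s ∈ S, s⁻¹ ∈ S)
    (h1 : (1 : G) ∉ S) {s t : G} (hs : s ∈ S) (ht : t ∈ S) :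
    t ∈ (cayleyGraph S).commonNeighbors 1 (s * t) := by
  rw [SimpleGraph.mem_commonNeighbors, cayleyGraph_adj_iff hS h1, cayleyGraph_adj_iff hS h1]
  exact ⟨by simpa using hS t ht, by simpa using hs⟩

theorem Set.exists_mem_ne_mul_ne_one (hS : 2 < S.ncard) :
    ∃ s ∈ S, ∃ t ∈ S, s ≠ t ∧ s * t ≠ 1 := by
  obtain ⟨a, b, c, ha, hb, hc, hab, hac, hbc⟩ :=
    (Set.two_lt_ncard_iff (Set.finite_of_ncard_pos (by omega))).mp hS
  by_cases habinv : a * b = 1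
  · refine ⟨a, ha, c, hc, hac, fun hacinv => hbc ?_⟩
    rw [← inv_eq_of_mul_eq_one_right habinv, inv_eq_of_mul_eq_one_right hacinv]
  · exact ⟨a, ha, b, hb, hab, habinv⟩

theorem cayleyGraph_exists_not_commonNeighbors_subsingleton [IsMulCommutative G]
    (hS : ∀ s ∈ S, s⁻¹ ∈ S) (h1 : (1 : G) ∉ S) (hS₃ : 2 < S.ncard) :
    ∃ x y : G, x ≠ y ∧ ¬ ((cayleyGraph S).commonNeighbors x y).Subsingleton := by
  obtain ⟨s, hs, t, ht, hst, hst₁⟩ := S.exists_mem_ne_mul_ne_one hS₃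
  refine ⟨1, s * t, Ne.symm hst₁, fun hsub => hst (hsub ?_ ?_)⟩
  · rw [mul_comm']
    exact cayleyGraph_mem_commonNeighbors_one_mul hS h1 ht hs
  · exact cayleyGraph_mem_commonNeighbors_one_mul hS h1 hs ht

end Cayley

/-- The collinearity graph of the 3-cover of GQ(2,2) (a halved graph of the Foster graph),
the unique distance-regular graph with intersection array {6,4,2,1; 1,1,4,6}, is not a
Cayley graph; consequently the Foster graph is not a Cayley graph. -/
theorem stmt_15 {G : Type*} [Group G] [Fintype G] (S : Set G)
    (hS : ∀ s ∈ S, s⁻¹ ∈ S) (h1 : (1 : G) ∉ S) :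
    ¬ (cayleyGraph S).IsDRGWith [6, 4, 2, 1] [1, 1, 4, 6] := by
  intro hDRG
  have := isMulCommutative_of_card_eq_45 (G := G)
    (by rw [Nat.card_eq_fintype_card, hDRG.card_eq_45])
  have hdeg : S.ncard = 6 := by
    rw [← cayleyGraph_neighborSet_one hS h1, hDRG.ncard_neighborSet (by simp)]
    rfl
  obtain ⟨x, y, hxy, hnot⟩ :=
    cayleyGraph_exists_not_commonNeighbors_subsingleton hS h1 (by omega)
  exact hnot (hDRG.commonNeighbors_subsingleton (by simp) (by simp) (by simp) hxy)
end

section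
/- For every finite group G of order 102 and every inverse-closed subset S ⊆ G with 1 ∉ S, the Cayley graph Cay(G,S) is not distance-regular with intersection array {3,2,2,2,1,1,1; 1,1,1,1,1,1,3}. Equivalently, the Biggs-Smith graph — the unique distance-regular graph with this intersection array, on 102 vertices — is not a Cayley graph. -/
/-!
The Biggs–Smith array forces girth 9: a vertex at distance `i ≤ 3` from `x` has no neighbour
at distance `i` (`aᵢ = 0`), and a vertex at distance `i ≤ 6` has a unique neighbour at distance
`i - 1` (`cᵢ = 1`); a non-backtracking closed walk of length `3 ≤ n ≤ 8` violates one of these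
at its midpoint. The graph is not bipartite either, as `a₄ = 1`.

If `|G| = 102`, the Sylow `17`-subgroup is normal, so `G` has a subgroup `N` of index `2`.
Non-bipartiteness puts some `s ∈ S` into `N`, connectivity some `t ∈ S` outside `N`, and since
`|S| = 3` and `|N|` is odd, `S = {s, s⁻¹, t}` with `t` an involution. Order `3` gives a triangle.
Otherwise `⟨s⟩` is normal (it is the Sylow `17`-subgroup or `N`), so `u = t s t` commutes with `s`
and the relator `s u s⁻¹ u⁻¹ = s t s t s⁻¹ t s⁻¹ t` is a reduced closed walk of length `8`.
-/

namespace SimpleGraph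

variable {V : Type*} {Γ : SimpleGraph V}

theorem ncard_adj_eq_add_add [Finite V] {x y : V} (hy : 1 ≤ Γ.dist x y) :
    {z | Γ.Adj y z}.ncard =
      {z | Γ.Adj y z ∧ Γ.dist x z = Γ.dist x y - 1}.ncard +
        {z | Γ.Adj y z ∧ Γ.dist x z = Γ.dist x y}.ncard +
          {z | Γ.Adj y z ∧ Γ.dist x z = Γ.dist x y + 1}.ncard := by
  have hsplit : {z | Γ.Adj y z} =
      ({z | Γ.Adj y z ∧ Γ.dist x z = Γ.dist x y - 1} ∪
        {z | Γ.Adj y z ∧ Γ.dist x z = Γ.dist x y}) ∪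
          {z | Γ.Adj y z ∧ Γ.dist x z = Γ.dist x y + 1} := by
    ext z
    simp only [Set.mem_ofPred_eq, Set.mem_union]
    constructor
    · intro hz
      rcases hz.diff_dist_adj (u := x) with h | h | h <;> simp [hz, h]
    · rintro ((⟨hz, -⟩ | ⟨hz, -⟩) | ⟨hz, -⟩) <;> exact hz
  rw [hsplit, Set.ncard_union_eq, Set.ncard_union_eq]
  · exact Set.disjoint_left.mpr fun z hz hz' => by simp_all; omega
  · exact Set.disjoint_left.mpr fun z hz hz' => by simp_all; omega

namespace IsDRGWith

theorem ncard_adj {b c : List ℕ} (h : Γ.IsDRGWith b c) (hb : b ≠ []) (y : V) :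
    {z | Γ.Adj y z}.ncard = b.getD 0 0 := by
  simpa using (h.2.2.2.2 0 y y dist_self).1 (List.length_pos_of_ne_nil hb)

theorem ncard_adj_dist_eq_self [Finite V] {b c : List ℕ} (h : Γ.IsDRGWith b c) {x y : V} {i : ℕ}
    (hi : 1 ≤ i) (hib : i < b.length) (hy : Γ.dist x y = i) :
    {z | Γ.Adj y z ∧ Γ.dist x z = i}.ncard = b.getD 0 0 - b.getD i 0 - c.getD (i - 1) 0 := by
  have hsplit := ncard_adj_eq_add_add (Γ := Γ) (x := x) (y := y) (by omega)
  rw [h.ncard_adj (List.ne_nil_of_length_pos (by omega)), hy,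
    (h.2.2.2.2 i x y hy).1 hib, (h.2.2.2.2 i x y hy).2 hi] at hsplit
  omega

end IsDRGWith

theorem Coloring.even_dist_iff_congr {V : Type*} {Γ : SimpleGraph V} (c : Γ.Coloring Bool)
    {u v : V} (huv : Γ.Reachable u v) : Even (Γ.dist u v) ↔ (c u ↔ c v) := by
  obtain ⟨p, hp⟩ := huv.exists_walk_length_eq_dist
  rw [← hp, c.even_length_iff_congr]

abbrev HasBiggsSmithArray (Γ : SimpleGraph V) : Prop :=
  Γ.IsDRGWith [3, 2, 2, 2, 1, 1, 1] [1, 1, 1, 1, 1, 1, 3]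

namespace HasBiggsSmithArray

theorem exists_dist_eq (h : Γ.HasBiggsSmithArray) (x : V) {k : ℕ} (hk : k ≤ 7) :
    ∃ y, Γ.dist x y = k := by
  induction k with
  | zero => exact ⟨x, dist_self⟩
  | succ k ih =>
    obtain ⟨y, hy⟩ := ih (by omega)
    have hb := (h.2.2.2.2 k x y hy).1 (by simp; omega)
    have hval : [3, 2, 2, 2, 1, 1, 1].getD k 0 ≠ 0 := by
      have : k < 7 := by omega
      interval_cases k <;> decide
    obtain ⟨z, -, hz⟩ := Set.nonempty_of_ncard_ne_zero (hb ▸ hval)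
    exact ⟨z, hz⟩

variable [Finite V]

theorem not_adj_of_dist_eq (h : Γ.HasBiggsSmithArray) {x y z : V} (hy : Γ.dist x y ≤ 3)
    (hz : Γ.dist x z = Γ.dist x y) : ¬ Γ.Adj y z := by
  intro hyz
  obtain hy0 | hy1 := Nat.eq_zero_or_pos (Γ.dist x y)
  · rw [hy0, h.1.dist_eq_zero_iff] at hz
    rw [h.1.dist_eq_zero_iff] at hy0
    exact hyz.ne (hy0.symm.trans hz)
  · have hempty := IsDRGWith.ncard_adj_dist_eq_self h hy1 (by simp; omega) rfl
    have hval : [3, 2, 2, 2, 1, 1, 1].getD 0 0 - [3, 2, 2, 2, 1, 1, 1].getD (Γ.dist x y) 0 -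
        [1, 1, 1, 1, 1, 1, 3].getD (Γ.dist x y - 1) 0 = 0 := by
      interval_cases Γ.dist x y <;> rfl
    rw [hval, Set.ncard_eq_zero] at hempty
    exact hempty.subset ⟨hyz, hz⟩

theorem eq_of_adj_of_dist_eq_pred (h : Γ.HasBiggsSmithArray) {x y a a' : V}
    (hy1 : 1 ≤ Γ.dist x y) (hy6 : Γ.dist x y ≤ 6) (ha : Γ.Adj y a) (ha' : Γ.Adj y a')
    (hxa : Γ.dist x a = Γ.dist x y - 1) (hxa' : Γ.dist x a' = Γ.dist x y - 1) : a = a' := by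
  have hc := (h.2.2.2.2 _ x y rfl).2 hy1
  have hval : [1, 1, 1, 1, 1, 1, 3].getD (Γ.dist x y - 1) 0 = 1 := by
    interval_cases Γ.dist x y <;> rfl
  rw [hval] at hc
  exact (Set.ncard_le_one_iff).mp hc.le ⟨ha, hxa⟩ ⟨ha', hxa'⟩

theorem exists_adj_dist_eq_of_dist_eq_four (h : Γ.HasBiggsSmithArray) {x y : V}
    (hy : Γ.dist x y = 4) : ∃ z, Γ.Adj y z ∧ Γ.dist x z = 4 := by
  have ha := IsDRGWith.ncard_adj_dist_eq_self h (by norm_num) (by norm_num) hy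
  obtain ⟨z, hz⟩ := Set.nonempty_of_ncard_ne_zero (ha ▸ (by decide : 3 - 1 - 1 ≠ 0))
  exact ⟨z, hz⟩

theorem dist_eq_add_one_of_adj (h : Γ.HasBiggsSmithArray) {x p y z : V}
    (hy1 : 1 ≤ Γ.dist x y) (hy3 : Γ.dist x y ≤ 3) (hp : Γ.dist x p = Γ.dist x y - 1)
    (hyp : Γ.Adj y p) (hyz : Γ.Adj y z) (hzp : z ≠ p) :
    Γ.dist x z = Γ.dist x y + 1 := by
  rcases hyz.diff_dist_adj (u := x) with hz | hz | hz
  · exact absurd hyz (h.not_adj_of_dist_eq hy3 hz)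
  · exact hz
  · exact absurd (h.eq_of_adj_of_dist_eq_pred hy1 (by omega) hyz hyp hz hp) hzp

theorem dist_eq_of_nonbacktracking (h : Γ.HasBiggsSmithArray) (v : ℕ → V) {k : ℕ} (hk : k ≤ 4)
    (hadj : ∀ i < k, Γ.Adj (v i) (v (i + 1))) (hnb : ∀ i, i + 2 ≤ k → v (i + 2) ≠ v i) :
    Γ.dist (v 0) (v k) = k := by
  induction k using Nat.twoStepInduction with
  | zero => exact dist_self
  | one => exact dist_eq_one_iff_adj.mpr (hadj 0 one_pos)
  | more k ih₀ ih₁ =>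
    have hk₀ := ih₀ (by omega) (fun i hi => hadj i (by omega)) (fun i hi => hnb i (by omega))
    have hk₁ := ih₁ (by omega) (fun i hi => hadj i (by omega)) (fun i hi => hnb i (by omega))
    have hstep := h.dist_eq_add_one_of_adj (x := v 0) (p := v k) (by omega) (by omega) (by omega)
      (hadj k (by omega)).symm (hadj (k + 1) (by omega)) (hnb k le_rfl)
    rwa [hk₁] at hstep

theorem false_of_closed_nonbacktracking (h : Γ.HasBiggsSmithArray) (v : ℕ → V) {n : ℕ}
    (hn3 : 3 ≤ n) (hn8 : n ≤ 8) (hadj : ∀ i < n, Γ.Adj (v i) (v (i + 1)))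
    (hnb : ∀ i, i + 2 ≤ n → v (i + 2) ≠ v i) (hclosed : v n = v 0) : False := by
  have hfwd : ∀ j ≤ 4, j ≤ n → Γ.dist (v 0) (v j) = j := fun j hj4 hjn =>
    h.dist_eq_of_nonbacktracking v hj4 (fun i hi => hadj i (by omega))
      (fun i hi => hnb i (by omega))
  have hbwd : ∀ j ≤ 4, j ≤ n → Γ.dist (v 0) (v (n - j)) = j := by
    intro j hj4 hjn
    have hrev := h.dist_eq_of_nonbacktracking (fun i => v (n - i)) hj4
      (fun i hi => by
        have := (hadj (n - (i + 1)) (by omega)).symm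
        rwa [show n - (i + 1) + 1 = n - i by omega] at this)
      (fun i hi => by
        have := (hnb (n - (i + 2)) (by omega)).symm
        rwa [show n - (i + 2) + 2 = n - i by omega] at this)
    simpa [hclosed] using hrev
  obtain ⟨m, rfl | rfl⟩ := Nat.even_or_odd' n
  · have hm := hfwd m (by omega) (by omega)
    have hprev := hfwd (m - 1) (by omega) (by omega)
    have hnext := hbwd (m - 1) (by omega) (by omega)
    rw [show 2 * m - (m - 1) = m - 1 + 2 by omega] at hnext
    refine hnb (m - 1) (by omega)
      (h.eq_of_adj_of_dist_eq_pred (x := v 0) (y := v m) (by omega) (by omega)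
        ?_ ?_ (by omega) (by omega))
    · simpa [show m - 1 + 2 = m + 1 by omega] using hadj m (by omega)
    · simpa [show m - 1 + 1 = m by omega] using (hadj (m - 1) (by omega)).symm
  · have hm := hfwd m (by omega) (by omega)
    have hnext := hbwd m (by omega) (by omega)
    rw [show 2 * m + 1 - m = m + 1 by omega] at hnext
    exact h.not_adj_of_dist_eq (x := v 0) (by omega) (by omega) (hadj m (by omega))

theorem isEmpty_coloring_bool (h : Γ.HasBiggsSmithArray) : IsEmpty (Γ.Coloring Bool) := by
  refine ⟨fun c => ?_⟩
  obtain ⟨x⟩ := h.1.nonempty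
  obtain ⟨y, hy⟩ := h.exists_dist_eq x (k := 4) (by norm_num)
  obtain ⟨z, hyz, hz⟩ := h.exists_adj_dist_eq_of_dist_eq_four hy
  have hcy := (c.even_dist_iff_congr (h.1.preconnected x y)).mp (by rw [hy]; decide)
  have hcz := (c.even_dist_iff_congr (h.1.preconnected x z)).mp (by rw [hz]; decide)
  exact c.valid hyz (by simp_all)

end HasBiggsSmithArray

end SimpleGraph

theorem Subgroup.normal_of_natCard_eq_prime {G : Type*} [Group G] [Finite G] {p m : ℕ}
    (hp : p.Prime) (hG : Nat.card G = p * m) (hm : m < p) (H : Subgroup G)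
    (hH : Nat.card H = p) : H.Normal := by
  have := Fact.mk hp
  have hm0 : 0 < m := Nat.pos_of_mul_pos_left (hG ▸ Nat.card_pos)
  have hfact : (Nat.card G).factorization p = 1 := by
    rw [hG, Nat.factorization_mul hp.ne_zero hm0.ne', Finsupp.add_apply,
      hp.factorization_self, Nat.factorization_eq_zero_of_not_dvd (Nat.not_dvd_of_pos_of_lt hm0 hm)]
  obtain ⟨P, hP⟩ : ∃ P : Sylow p G, (P : Subgroup G) = H :=
    ⟨Sylow.ofCard H (by rw [hH, hfact, pow_one]), rfl⟩
  have hindex : (P : Subgroup G).index = m := by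
    have := H.card_mul_index
    rw [hH, hG] at this
    rw [hP]
    exact Nat.eq_of_mul_eq_mul_left hp.pos this
  have hcount : Nat.card (Sylow p G) = 1 := by
    have hdvd := P.card_dvd_index
    rw [hindex] at hdvd
    have hle := Nat.le_of_dvd hm0 hdvd
    have hmod : Nat.card (Sylow p G) % p = 1 % p := card_sylow_modEq_one p G
    rw [Nat.mod_eq_of_lt hp.one_lt] at hmod
    rwa [Nat.mod_eq_of_lt (hle.trans_lt hm)] at hmod
  have : Subsingleton (Sylow p G) := (Nat.card_eq_one_iff_unique.mp hcount).1
  exact hP ▸ Sylow.normal_of_subsingleton P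

theorem exists_index_eq_two_of_natCard_eq_102 {G : Type*} [Group G] [Finite G]
    (hG : Nat.card G = 102) : ∃ N : Subgroup G, N.index = 2 ∧ Nat.card N = 51 := by
  have : Fact (Nat.Prime 17) := ⟨by norm_num⟩
  have : Fact (Nat.Prime 3) := ⟨by norm_num⟩
  obtain ⟨x, hx⟩ := exists_prime_orderOf_dvd_card' (G := G) 17 (by rw [hG]; norm_num)
  have : (Subgroup.zpowers x).Normal := Subgroup.normal_of_natCard_eq_prime (p := 17) (m := 6)
    (by norm_num) hG (by norm_num) _ (by rw [Nat.card_zpowers, hx])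
  have hQ : Nat.card (G ⧸ Subgroup.zpowers x) = 6 := by
    have := (Subgroup.zpowers x).card_mul_index
    rw [Nat.card_zpowers, hx, hG, Subgroup.index_eq_card] at this
    omega
  obtain ⟨y, hy⟩ :=
    exists_prime_orderOf_dvd_card' (G := G ⧸ Subgroup.zpowers x) 3 (by rw [hQ]; norm_num)
  set N := (Subgroup.zpowers y).comap (QuotientGroup.mk' _)
  have hN : N.index = 2 := by
    rw [Subgroup.index_comap_of_surjective _ (QuotientGroup.mk'_surjective _)]
    have := (Subgroup.zpowers y).card_mul_index
    rw [Nat.card_zpowers, hy, hQ] at this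
    omega
  have := N.card_mul_index
  rw [hN, hG] at this
  exact ⟨N, hN, by omega⟩

theorem orderOf_eq_three_or_seventeen_or_fiftyone {G : Type*} [Group G] {N : Subgroup G}
    (hN : Nat.card N = 51) {s : G} (hsN : s ∈ N) (hs1 : s ≠ 1) :
    orderOf s = 3 ∨ orderOf s = 17 ∨ orderOf s = 51 := by
  have hdvd : orderOf s ∈ Nat.divisors 51 :=
    Nat.mem_divisors.mpr ⟨hN ▸ N.orderOf_dvd_natCard hsN, by norm_num⟩
  rw [show Nat.divisors 51 = {1, 3, 17, 51} by decide] at hdvd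
  simp_all

theorem inv_eq_self_of_ncard_eq_three {G : Type*} [Group G] {S : Set G} (hS : ∀ s ∈ S, s⁻¹ ∈ S)
    (hS3 : S.ncard = 3) {s t : G} (hs : s ∈ S) (hss : s⁻¹ ≠ s) (ht : t ∈ S) (hts : t ≠ s)
    (hts' : t ≠ s⁻¹) : t⁻¹ = t := by
  by_contra htt
  have hsub : ({s, s⁻¹, t, t⁻¹} : Set G) ⊆ S := by
    simp [Set.insert_subset_iff, hs, hS s hs, ht, hS t ht]
  have hfin : S.Finite := Set.finite_of_ncard_pos (by omega)
  have := Set.ncard_le_ncard hsub hfin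
  rw [Set.ncard_insert_of_notMem, Set.ncard_insert_of_notMem, Set.ncard_pair (Ne.symm htt)] at this
  · omega
  · simp [hts'.symm, hts.symm]
  · have hst : s ≠ t⁻¹ := fun h => hts' (by rw [h, inv_inv])
    simp [hss.symm, hts.symm, hst]

section Cayley

variable {G : Type*} [Group G] {S : Set G}

theorem cayleyGraph_adj_mul_left (hS : ∀ s ∈ S, s⁻¹ ∈ S) (h1 : (1 : G) ∉ S) {g : G}
    (hg : g ∈ S) (a : G) : (cayleyGraph S).Adj a (g * a) := by
  refine ⟨fun h => h1 ?_, by simpa using hS g hg, by simpa using hg⟩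
  rwa [← right_eq_mul.mp h]

theorem cayleyGraph_adj_one_iff (hS : ∀ s ∈ S, s⁻¹ ∈ S) (h1 : (1 : G) ∉ S) {z : G} :
    (cayleyGraph S).Adj 1 z ↔ z ∈ S :=
  ⟨fun h => by simpa using h.2.2, fun hz => by simpa using cayleyGraph_adj_mul_left hS h1 hz 1⟩

theorem mul_inv_mem_closure_of_walk {a b : G} (p : (cayleyGraph S).Walk a b) :
    b * a⁻¹ ∈ Subgroup.closure S := by
  induction p with
  | nil => simp
  | @cons a c b hadj p ih =>
    simpa [mul_assoc] using mul_mem ih (Subgroup.subset_closure hadj.2.2)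

theorem exists_mem_not_mem_of_cayleyGraph_connected (hconn : (cayleyGraph S).Connected)
    {N : Subgroup G} (hN : N ≠ ⊤) : ∃ t ∈ S, t ∉ N := by
  by_contra! hSN
  refine hN ((Subgroup.eq_top_iff' N).mpr fun g => ?_)
  simpa using (Subgroup.closure_le N).mpr hSN
    (mul_inv_mem_closure_of_walk (hconn.preconnected 1 g).some)

end Cayley

namespace SimpleGraph.HasBiggsSmithArray

variable {G : Type*} [Group G] [Finite G] {S : Set G}

theorem cayleyGraph_prod_ne_one (h : (cayleyGraph S).HasBiggsSmithArray)
    (hS : ∀ s ∈ S, s⁻¹ ∈ S) (h1 : (1 : G) ∉ S) {w : List G} (hw : ∀ g ∈ w, g ∈ S)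
    (hred : w.IsChain fun a b => a * b ≠ 1)
    (h3 : 3 ≤ w.length) (h8 : w.length ≤ 8) : w.prod ≠ 1 := by
  intro hprod
  have hdrop : ∀ i (hi : i < w.length), (w.drop i).prod = w[i] * (w.drop (i + 1)).prod := by
    intro i hi
    rw [List.prod_drop_succ _ _ hi, mul_inv_cancel_left]
  refine h.false_of_closed_nonbacktracking (fun i => (w.drop i).prod) h3 h8 (fun i hi => ?_)
    (fun i hi heq => ?_) (by simpa using hprod.symm)
  · simp only [hdrop i hi]
    exact (cayleyGraph_adj_mul_left hS h1 (hw _ (List.getElem_mem hi)) _).symm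
  · rw [hdrop i (by omega), hdrop (i + 1) (by omega), ← mul_assoc] at heq
    exact List.isChain_iff_getElem.mp hred i (by omega) (right_eq_mul.mp heq)

theorem orderOf_ne_three (h : (cayleyGraph S).HasBiggsSmithArray) (hS : ∀ s ∈ S, s⁻¹ ∈ S)
    (h1 : (1 : G) ∉ S) {s : G} (hs : s ∈ S) : orderOf s ≠ 3 := by
  intro hord
  have hss : s * s ≠ 1 := fun hss => by
    have := orderOf_dvd_of_pow_eq_one (x := s) (n := 2) (by rw [pow_two, hss])
    rw [hord] at this
    norm_num at this
  refine h.cayleyGraph_prod_ne_one hS h1 (w := [s, s, s]) (by simpa using hs)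
    (by simpa using hss) le_rfl (by norm_num) ?_
  have hs3 := pow_orderOf_eq_one s
  rw [hord, pow_three] at hs3
  simpa using hs3

theorem not_normal_zpowers (h : (cayleyGraph S).HasBiggsSmithArray) (hS : ∀ s ∈ S, s⁻¹ ∈ S)
    (h1 : (1 : G) ∉ S) {s t : G} (hs : s ∈ S) (ht : t ∈ S) (htt : t⁻¹ = t)
    (hts : t ∉ Subgroup.zpowers s) : ¬ (Subgroup.zpowers s).Normal := by
  intro hnormal
  have hconj := hnormal.conj_mem s (Subgroup.mem_zpowers s) t
  rw [htt] at hconj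
  obtain ⟨k, hk⟩ := Subgroup.mem_zpowers_iff.mp hconj
  have hcomm : s * (t * s * t) = (t * s * t) * s := by
    rw [← hk]; exact ((Commute.refl s).zpow_right k).eq
  have hne : ∀ x ∈ Subgroup.zpowers s, x * t ≠ 1 ∧ t * x ≠ 1 := fun x hx =>
    ⟨fun hxt => hts (eq_inv_of_mul_eq_one_right hxt ▸ inv_mem hx),
      fun htx => hts (eq_inv_of_mul_eq_one_left htx ▸ inv_mem hx)⟩
  have hs' := hne s (Subgroup.mem_zpowers s)
  have hsi := hne s⁻¹ (inv_mem (Subgroup.mem_zpowers s))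
  refine h.cayleyGraph_prod_ne_one hS h1 (w := [s, t, s, t, s⁻¹, t, s⁻¹, t])
    (by simp [hs, ht, hS s hs]) (by simp [hs'.1, hs'.2, hsi.1, hsi.2]) (by norm_num) le_rfl ?_
  simp only [List.prod_cons, List.prod_nil, mul_one]
  have hinv : (t * s * t)⁻¹ = t * s⁻¹ * t := by simp only [mul_inv_rev, htt, mul_assoc]
  calc s * (t * (s * (t * (s⁻¹ * (t * (s⁻¹ * t))))))
      = s * (t * s * t) * s⁻¹ * (t * s⁻¹ * t) := by group
    _ = s * (t * s * t) * s⁻¹ * (t * s * t)⁻¹ := by rw [hinv]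
    _ = 1 := by rw [hcomm]; group

theorem exists_mem_subgroup_of_index_eq_two (h : (cayleyGraph S).HasBiggsSmithArray)
    {N : Subgroup G} (hN : N.index = 2) : ∃ s ∈ S, s ∈ N := by
  classical
  by_contra! hSN
  refine h.isEmpty_coloring_bool.false (Coloring.mk (fun a => decide (a ∈ N)) fun hab => ?_)
  have := hSN _ hab.2.1
  rw [Subgroup.mul_mem_iff_of_index_two hN, inv_mem_iff] at this
  simpa only [ne_eq, decide_eq_decide] using this

end SimpleGraph.HasBiggsSmithArray

/-- The Biggs-Smith graph, the unique distance-regular graph with intersection array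
{3,2,2,2,1,1,1; 1,1,1,1,1,1,3}, on 102 vertices, is not a Cayley graph. -/
theorem stmt_16 {G : Type*} [Group G] [Fintype G] (S : Set G)
    (hS : ∀ s ∈ S, s⁻¹ ∈ S) (h1 : (1 : G) ∉ S)
    (hG : Fintype.card G = 102) :
    ¬ (cayleyGraph S).IsDRGWith [3, 2, 2, 2, 1, 1, 1] [1, 1, 1, 1, 1, 1, 3] := by
  intro hD
  have h : (cayleyGraph S).HasBiggsSmithArray := hD
  rw [← Nat.card_eq_fintype_card] at hG
  have hS3 : S.ncard = 3 := by
    simpa [cayleyGraph_adj_one_iff hS h1] using hD.ncard_adj (by simp) 1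
  obtain ⟨N, hN, hN51⟩ := exists_index_eq_two_of_natCard_eq_102 hG
  obtain ⟨s, hsS, hsN⟩ := h.exists_mem_subgroup_of_index_eq_two hN
  obtain ⟨t, htS, htN⟩ := exists_mem_not_mem_of_cayleyGraph_connected h.1
    (N := N) (by rintro rfl; simp at hN)
  have hord := orderOf_eq_three_or_seventeen_or_fiftyone hN51 hsN (ne_of_mem_of_not_mem hsS h1)
  have hss : s⁻¹ ≠ s := fun hss => by
    have := Nat.le_of_dvd two_pos <| orderOf_dvd_of_pow_eq_one (x := s) (n := 2)
      (by rw [pow_two, ← inv_eq_iff_mul_eq_one, hss])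
    omega
  have hts : t ∉ Subgroup.zpowers s := fun ht => htN (Subgroup.zpowers_le.mpr hsN ht)
  have htt : t⁻¹ = t := inv_eq_self_of_ncard_eq_three hS hS3 hsS hss htS
    (ne_of_mem_of_not_mem (Subgroup.mem_zpowers s) hts).symm
    (ne_of_mem_of_not_mem (inv_mem (Subgroup.mem_zpowers s)) hts).symm
  rcases hord with h3 | h17 | h51
  · exact h.orderOf_ne_three hS h1 hsS h3
  · refine h.not_normal_zpowers hS h1 hsS htS htt hts ?_
    exact Subgroup.normal_of_natCard_eq_prime (p := 17) (m := 6) (by norm_num) hG (by norm_num) _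
      (by rw [Nat.card_zpowers, h17])
  · refine h.not_normal_zpowers hS h1 hsS htS htt hts ?_
    rw [Subgroup.eq_of_le_of_card_ge (Subgroup.zpowers_le.mpr hsN)
      (by rw [Nat.card_zpowers, h51, hN51])]
    exact Subgroup.normal_of_index_eq_two hN
end
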